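/- The kernel of the homomorphism g: GL_m(ℂ[t^{±1},q^{±1}]) → Aut(L(α,β)/L²(α,β)) induced by conjugation is Z · L(α,β), where Z is the center of GL_m(ℂ[t^{±1},q^{±1}]) (the nonzero scalar matrices over units of the ring), provided m ≥ 2. -/

import Mathlib

open Matrix LaurentPolynomial

/-- The two-variable Laurent polynomial ring `ℂ[t^{±1}, q^{±1}]`. -/
abbrev LaurentTwo : Type := LaurentPolynomial (LaurentPolynomial ℂ)

/-- The variable `t` in `ℂ[t^{±1}, q^{±1}]`. -/
noncomputable def tVar : LaurentTwo := LaurentPolynomial.C (LaurentPolynomial.T 1)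

/-- The variable `q` in `ℂ[t^{±1}, q^{±1}]`. -/
noncomputable def qVar : LaurentTwo := LaurentPolynomial.T 1

/-- The inclusion of constants `ℂ → ℂ[t^{±1}, q^{±1}]`. -/
noncomputable def constC : ℂ →+* LaurentTwo :=
  LaurentPolynomial.C.comp LaurentPolynomial.C

/-!
Reducing modulo `J = (t - α, q - β)` means evaluating at `(α, β)`. If `Z` acts trivially, then
conjugating the transvection `1 + (t - α) E_ij` gives `(t - α)(Z E_ij Z⁻¹ - E_ij) ≡ 0 mod J²`.
Multiplication by `t - α` is injective from `R/J` to `J/J²`, where `R = ℂ[t^{±1}, q^{±1}]` (evaluate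
at `t = α + ε` over the dual numbers), so `Z E_ij Z⁻¹ ≡ E_ij mod J`. Hence `Z(α, β)` commutes with every `E_ij`, i.e. it is a
nonzero scalar `λ`, and `λ⁻¹ Z ≡ 1 mod J`. Conversely, if `Z = c Z₁` with `Z₁ ≡ 1 mod J`, then
`Z A Z⁻¹ - A = [Z₁ - 1, A - 1] (c Z⁻¹)` has its entries in `J²` whenever `A ≡ 1 mod J`.
-/

open TrivSqZeroExt DualNumber

namespace Ideal

variable {n R : Type*} [Fintype n] [DecidableEq n] [CommRing R]

theorem single_mem_matrix {I : Ideal R} (i j : n) {x : R} (hx : x ∈ I) :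
    single i j x ∈ I.matrix n := fun k l => by
  rw [single_apply]
  split_ifs
  exacts [hx, I.zero_mem]

theorem mul_mem_matrix_mul {I K : Ideal R} {M N : Matrix n n R} (hM : M ∈ I.matrix n)
    (hN : N ∈ K.matrix n) : M * N ∈ (I * K).matrix n :=
  fun i j => Ideal.sum_mem _ fun k _ => mul_mem_mul (hM i k) (hN k j)

theorem mul_mem_matrix_right {I : Ideal R} {M : Matrix n n R} (hM : M ∈ I.matrix n)
    (N : Matrix n n R) : M * N ∈ I.matrix n := by
  simpa using mul_mem_matrix_mul (K := ⊤) hM fun _ _ => Submodule.mem_top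

theorem mem_matrix_ker_iff_map_eq_zero {S : Type*} [Semiring S] (f : R →+* S) (M : Matrix n n R) :
    M ∈ (RingHom.ker f).matrix n ↔ M.map f = 0 := by
  simp [← Matrix.ext_iff]

end Ideal

section ConjugationModIdeal

variable {n R : Type*} [Fintype n] [DecidableEq n] [CommRing R]

theorem conj_sub_mem_matrix_sq_of_sub_one_mem {J : Ideal R} {Z Z₁ A : Matrix n n R} {c : R} (hZ : IsUnit Z)
    (hZc : Z = c • Z₁) (hZ₁ : Z₁ - 1 ∈ J.matrix n) (hA : A - 1 ∈ J.matrix n) :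
    Z * A * Z⁻¹ - A ∈ (J ^ 2).matrix n := by
  have hZZ : Z * Z⁻¹ = 1 := mul_nonsing_inv Z ((isUnit_iff_isUnit_det Z).mp hZ)
  have hZA : Z * A - A * Z = c • ((Z₁ - 1) * (A - 1) - (A - 1) * (Z₁ - 1)) := by
    rw [hZc, Matrix.smul_mul, Matrix.mul_smul, ← smul_sub]
    noncomm_ring
  have hcomm : Z * A * Z⁻¹ - A = ((Z₁ - 1) * (A - 1) - (A - 1) * (Z₁ - 1)) * (c • Z⁻¹) := by
    rw [Matrix.mul_smul, ← Matrix.smul_mul, ← hZA, sub_mul, mul_assoc A, hZZ, mul_one]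
  rw [hcomm, sq]
  exact Ideal.mul_mem_matrix_right
    (sub_mem (Ideal.mul_mem_matrix_mul hZ₁ hA) (Ideal.mul_mem_matrix_mul hA hZ₁)) _

theorem commutator_single_mem_matrix_of_conj_transvection {J : Ideal R} {Z : Matrix n n R} (hZ : IsUnit Z) {i j : n}
    {d : R} (hd : ∀ x, d * x ∈ J ^ 2 → x ∈ J)
    (h : Z * transvection i j d * Z⁻¹ - transvection i j d ∈ (J ^ 2).matrix n) :
    Z * single i j 1 - single i j 1 * Z ∈ J.matrix n := by
  set E : Matrix n n R := single i j 1
  have hZZ : Z * Z⁻¹ = 1 := mul_nonsing_inv Z ((isUnit_iff_isUnit_det Z).mp hZ)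
  have hZZ' : Z⁻¹ * Z = 1 := nonsing_inv_mul Z ((isUnit_iff_isUnit_det Z).mp hZ)
  have hconj : Z * transvection i j d * Z⁻¹ - transvection i j d = d • (Z * E * Z⁻¹ - E) := by
    rw [transvection, show single i j d = d • E by simp [E, smul_single], mul_add, add_mul,
      mul_one, hZZ, Matrix.mul_smul, Matrix.smul_mul, smul_sub]
    abel
  rw [hconj] at h
  have hE : Z * E * Z⁻¹ - E ∈ J.matrix n := fun k l => hd _ (by simpa using h k l)
  rw [show Z * E - E * Z = (Z * E * Z⁻¹ - E) * Z by rw [sub_mul, mul_assoc _ Z⁻¹, hZZ', mul_one]]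
  exact Ideal.mul_mem_matrix_right hE Z

theorem exists_unit_smul_sub_one_mem_matrix_ker [Nonempty n] {K : Type*} [Field K]
    {ι : K →+* R} {ev : R →+* K} (hι : Function.LeftInverse ev ι) {Z : Matrix n n R}
    (hZ : IsUnit Z)
    (hcomm : Pairwise fun i j => Z * single i j 1 - single i j 1 * Z ∈ (RingHom.ker ev).matrix n) :
    ∃ (c : Rˣ) (Z₁ : Matrix n n R),
      IsUnit Z₁ ∧ Z₁ - 1 ∈ (RingHom.ker ev).matrix n ∧ Z = (c : R) • Z₁ := by
  obtain ⟨a, ha⟩ : Z.map ev ∈ Set.range (scalar n) := by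
    refine mem_range_scalar_of_commute_single fun i j hij => ?_
    have := (Ideal.mem_matrix_ker_iff_map_eq_zero ev _).mp (hcomm hij)
    exact (sub_eq_zero.mp (by simpa [Matrix.map_sub, Matrix.map_mul] using this)).symm
  have ha0 : a ≠ 0 := by
    rintro rfl
    simpa [← ha] using hZ.map ev.mapMatrix
  set c : Rˣ := Units.map ι (Units.mk0 a ha0)
  refine ⟨c, c⁻¹ • Z, hZ.smul c⁻¹, ?_, (smul_inv_smul c Z).symm⟩
  rw [Ideal.mem_matrix_ker_iff_map_eq_zero]
  ext i j
  have hij := congrFun₂ ha i j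
  rcases eq_or_ne i j with rfl | hne
  · simp only [scalar_apply, diagonal_apply_eq, map_apply] at hij
    simp [c, Units.smul_def, ← hij, hι _, ha0]
  · simp only [scalar_apply, diagonal_apply_ne _ hne, map_apply] at hij
    simp [c, Units.smul_def, ← hij, hne]

end ConjugationModIdeal

theorem LaurentPolynomial.ringHom_ext {R S : Type*} [CommSemiring R] [Semiring S]
    {f g : R[T;T⁻¹] →+* S} (hC : f.comp C = g.comp C) (hT : f (T 1) = g (T 1)) : f = g :=
  IsLocalization.ringHom_ext (Submonoid.powers (Polynomial.X : Polynomial R)) <|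
    Polynomial.ringHom_ext' (by ext; simpa using RingHom.congr_fun hC _)
      (by simpa [algebraMap_eq_toLaurent] using hT)

namespace LaurentTwo

theorem ringHom_ext {S : Type*} [Semiring S] {f g : LaurentTwo →+* S}
    (hC : f.comp constC = g.comp constC) (ht : f tVar = g tVar) (hq : f qVar = g qVar) :
    f = g :=
  LaurentPolynomial.ringHom_ext (LaurentPolynomial.ringHom_ext hC ht) hq

variable {S : Type*} [CommRing S] [Algebra ℂ S]

noncomputable def evalAt (a b : Sˣ) : LaurentTwo →+* S :=
  eval₂ (eval₂ (algebraMap ℂ S) a) b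

@[simp] theorem evalAt_constC (a b : Sˣ) (c : ℂ) : evalAt a b (constC c) = algebraMap ℂ S c := by
  simp [evalAt, constC]

@[simp] theorem evalAt_tVar (a b : Sˣ) : evalAt a b tVar = a := by
  simp [evalAt, tVar]

@[simp] theorem evalAt_qVar (a b : Sˣ) : evalAt a b qVar = b := by
  simp [evalAt, qVar]

theorem comp_evalAt {S' : Type*} [CommRing S'] [Algebra ℂ S'] (g : S →ₐ[ℂ] S') (a b : Sˣ) :
    (g : S →+* S').comp (evalAt a b) = evalAt (Units.map g a) (Units.map g b) :=
  ringHom_ext (by ext; simp) (by simp) (by simp)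

theorem ker_evalAt {α β : ℂ} (hα : α ≠ 0) (hβ : β ≠ 0) :
    RingHom.ker (evalAt (Units.mk0 α hα) (Units.mk0 β hβ)) =
      Ideal.span {tVar - constC α, qVar - constC β} := by
  set J := Ideal.span {tVar - constC α, qVar - constC β}
  refine le_antisymm (fun x hx => ?_) (Ideal.span_le.mpr ?_)
  · have hπ : Ideal.Quotient.mk J =
        ((Ideal.Quotient.mk J).comp constC).comp (evalAt (Units.mk0 α hα) (Units.mk0 β hβ)) := by
      refine ringHom_ext (by ext; simp) ?_ ?_ <;>
      simpa [Ideal.Quotient.eq] using Ideal.subset_span (by simp)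
    rw [← Ideal.Quotient.eq_zero_iff_mem, hπ]
    simp [RingHom.mem_ker.mp hx]
  · rintro x (rfl | rfl) <;> simp

noncomputable def dualUnit {α : ℂ} (hα : α ≠ 0) : ℂ[ε]ˣ :=
  (isUnit_iff_isUnit_fst.mpr (by simpa using hα) : IsUnit (inl α + ε : ℂ[ε])).unit

theorem mem_ker_of_tVar_sub_mul_mem_sq {α β : ℂ} (hα : α ≠ 0) (hβ : β ≠ 0) {x : LaurentTwo}
    (hx : (tVar - constC α) * x ∈ RingHom.ker (evalAt (Units.mk0 α hα) (Units.mk0 β hβ)) ^ 2) :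
    x ∈ RingHom.ker (evalAt (Units.mk0 α hα) (Units.mk0 β hβ)) := by
  -- `ψ f = f(α, β) + (∂f/∂t)(α, β) ε`: it kills `J²` and sends `t - α` to `ε`.
  set ψ : LaurentTwo →+* ℂ[ε] :=
    evalAt (dualUnit hα) (Units.map (algebraMap ℂ ℂ[ε]) (Units.mk0 β hβ))
  have hfst : (fstHom ℂ ℂ ℂ : ℂ[ε] →+* ℂ).comp ψ = evalAt (Units.mk0 α hα) (Units.mk0 β hβ) := by
    rw [comp_evalAt]
    congr 1
    ext
    simp [dualUnit]
  have hψt : ψ (tVar - constC α) = ε := by simp [ψ, dualUnit, algebraMap_eq_inl]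
  have hker : RingHom.ker (evalAt (Units.mk0 α hα) (Units.mk0 β hβ)) ≤
      (Ideal.span {(ε : ℂ[ε])}).comap ψ := by
    rw [ker_evalAt, Ideal.span_le]
    rintro _ (rfl | rfl)
    · simp [hψt]
    · simp [ψ, algebraMap_eq_inl]
  have hεx : ε * ψ x = 0 := by
    have := (Ideal.pow_right_mono hker 2).trans (Ideal.le_comap_pow _ 2) hx
    rw [Ideal.span_singleton_pow, sq, eps_mul_eps, Ideal.mem_comap, map_mul, hψt] at this
    simpa using this
  have hx0 : fst (ψ x) = 0 := by simpa using congrArg snd hεx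
  rw [RingHom.mem_ker, ← hfst]
  exact hx0

end LaurentTwo

/-- For `m ≥ 2`, a unit `Z ∈ GL_m(ℂ[t^{±1},q^{±1}])` acts trivially on
`L(α,β)/L²(α,β)` by conjugation if and only if `Z ∈ Z(GL_m) · L(α,β)`, i.e. `Z` is a
unit scalar multiple of a matrix congruent to `I` modulo `(t-α, q-β)`. -/
theorem lkb_conjugation_kernel
    (m : ℕ) (hm : 2 ≤ m) (α β : ℂ) (hα : α ≠ 0) (hβ : β ≠ 0)
    (J : Ideal LaurentTwo)
    (hJ : J = Ideal.span {tVar - constC α, qVar - constC β})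
    (Z : Matrix (Fin m) (Fin m) LaurentTwo) (hZ : IsUnit Z) :
    (∀ A : Matrix.SpecialLinearGroup (Fin m) LaurentTwo,
      (∀ k l, ((A : Matrix (Fin m) (Fin m) LaurentTwo) - 1) k l ∈ J) →
      ∀ k l,
        (Z * (A : Matrix (Fin m) (Fin m) LaurentTwo) * Z⁻¹
          - (A : Matrix (Fin m) (Fin m) LaurentTwo) :
          Matrix (Fin m) (Fin m) LaurentTwo) k l ∈ J ^ 2)
    ↔ ∃ (c : LaurentTwoˣ) (Z₁ : Matrix (Fin m) (Fin m) LaurentTwo),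
        IsUnit Z₁ ∧ (∀ k l, (Z₁ - 1) k l ∈ J) ∧ Z = (c : LaurentTwo) • Z₁ := by
  rw [← LaurentTwo.ker_evalAt hα hβ] at hJ
  subst hJ
  set ev := LaurentTwo.evalAt (Units.mk0 α hα) (Units.mk0 β hβ)
  constructor
  · intro H
    have : Nonempty (Fin m) := ⟨⟨0, by omega⟩⟩
    refine exists_unit_smul_sub_one_mem_matrix_ker (ι := constC) (fun c => by simp [ev]) hZ
      fun i j hij => ?_
    have hd : tVar - constC α ∈ RingHom.ker ev := by simp [ev]
    have htrans : transvection i j (tVar - constC α) - 1 ∈ (RingHom.ker ev).matrix (Fin m) := by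
      simpa [transvection] using Ideal.single_mem_matrix i j hd
    exact commutator_single_mem_matrix_of_conj_transvection hZ
      (fun _ => LaurentTwo.mem_ker_of_tVar_sub_mul_mem_sq hα hβ)
      (H ⟨_, det_transvection_of_ne i j hij _⟩ htrans)
  · rintro ⟨c, Z₁, -, hZ₁, hZc⟩ A hA
    exact conj_sub_mem_matrix_sq_of_sub_one_mem hZ hZc hZ₁ hA
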